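/- arXiv:1107.0384 — 13 statements merged into one kernel-verified Lean document; each statement's English description precedes it below -/
import Mathlib

section
/- Let e and f be idempotents in a ring R. Then eR + fR is a direct summand of R as a right R-module if and only if (1-e)fR is a direct summand of R as a right R-module. -/
def IsSummand {R M : Type*} [Ring R] [AddCommGroup M] [Module R M]
    (p : Submodule R M) : Prop :=
  ∃ q : Submodule R M, IsCompl p q

/-- If `A` is a summand with complement `A'` and `B ≤ A'`, then `A ⊔ B` is a summand
iff `B` is a summand. -/
lemma isSummand_sup_iff {R M : Type*} [Ring R] [AddCommGroup M] [Module R M]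
    {A A' B : Submodule R M} (h : IsCompl A A') (hB : B ≤ A') :
    IsSummand (A ⊔ B) ↔ IsSummand B := by
  constructor
  · rintro ⟨C, hC⟩
    refine ⟨A ⊔ C, ?_, ?_⟩
    · rw [Submodule.disjoint_def]
      intro x hxB hxAC
      obtain ⟨a, ha, c, hc, rfl⟩ := Submodule.mem_sup.mp hxAC
      have hc0 : c = 0 := by
        have h1 : c ∈ A ⊔ B := by
          have hcc : c = (a + c) - a := by abel
          rw [hcc]
          exact Submodule.sub_mem _ (Submodule.mem_sup_right hxB) (Submodule.mem_sup_left ha)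
        exact (Submodule.disjoint_def.mp hC.disjoint) c h1 hc
      have ha0 : a = 0 := by
        have haA' : a ∈ A' := by
          have : a + c = a := by rw [hc0, add_zero]
          exact hB (this ▸ hxB)
        exact (Submodule.disjoint_def.mp h.disjoint) a ha haA'
      rw [ha0, hc0, add_zero]
    · rw [codisjoint_iff]
      calc B ⊔ (A ⊔ C) = (A ⊔ B) ⊔ C := by rw [← sup_assoc, sup_comm B A]
        _ = ⊤ := hC.codisjoint.eq_top
  · rintro ⟨D, hD⟩
    refine ⟨A' ⊓ D, ?_, ?_⟩
    · rw [Submodule.disjoint_def]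
      intro x hx hx2
      obtain ⟨a, ha, b, hb, rfl⟩ := Submodule.mem_sup.mp hx
      obtain ⟨hxA', hxD⟩ := Submodule.mem_inf.mp hx2
      have ha0 : a = 0 := by
        have haA' : a ∈ A' := by
          have haa : a = (a + b) - b := by abel
          rw [haa]
          exact Submodule.sub_mem _ hxA' (hB hb)
        exact (Submodule.disjoint_def.mp h.disjoint) a ha haA'
      have hb0 : b = 0 :=
        (Submodule.disjoint_def.mp hD.disjoint) b hb (by simpa [ha0] using hxD)
      rw [ha0, hb0, add_zero]
    · rw [codisjoint_iff, eq_top_iff]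
      intro m _
      have hm : m ∈ A ⊔ A' := by rw [h.codisjoint.eq_top]; trivial
      obtain ⟨a, ha, a', ha', rfl⟩ := Submodule.mem_sup.mp hm
      have ha'' : a' ∈ B ⊔ D := by rw [hD.codisjoint.eq_top]; trivial
      obtain ⟨b, hb, d, hd, rfl⟩ := Submodule.mem_sup.mp ha''
      have hdA' : d ∈ A' := by
        have hdd : d = (b + d) - b := by abel
        rw [hdd]
        exact Submodule.sub_mem _ ha' (hB hb)
      have hre : a + (b + d) = (a + b) + d := by abel
      rw [hre]
      exact Submodule.add_mem _
        (Submodule.mem_sup_left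
          (Submodule.add_mem _ (Submodule.mem_sup_left ha) (Submodule.mem_sup_right hb)))
        (Submodule.mem_sup_right (Submodule.mem_inf.mpr ⟨hdA', hd⟩))

set_option maxHeartbeats 1000000 in
/-- For idempotents `e, f` of `R`, the right ideal `eR + fR` is a direct summand of `R_R`
iff `(1-e)fR` is a direct summand of `R_R`. -/
theorem stmt1 {R : Type*} [Ring R] (e f : R)
    (he : IsIdempotentElem e) (hf : IsIdempotentElem f) :
    IsSummand (Submodule.span Rᵐᵒᵖ {e} ⊔ Submodule.span Rᵐᵒᵖ {f}) ↔
    IsSummand (Submodule.span Rᵐᵒᵖ {(1 - e) * f}) := by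
  have mem_span : ∀ a x : R, x ∈ Submodule.span Rᵐᵒᵖ {a} ↔ ∃ r : R, a * r = x := by
    intro a x
    rw [Submodule.mem_span_singleton]
    constructor
    · rintro ⟨r, rfl⟩; exact ⟨r.unop, rfl⟩
    · rintro ⟨r, rfl⟩; exact ⟨MulOpposite.op r, rfl⟩
  have hcompl : IsCompl (Submodule.span Rᵐᵒᵖ {e}) (Submodule.span Rᵐᵒᵖ {1 - e}) := by
    constructor
    · rw [Submodule.disjoint_def]
      intro x hx1 hx2
      obtain ⟨r, rfl⟩ := (mem_span e _).mp hx1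
      obtain ⟨s, hs⟩ := (mem_span (1 - e) _).mp hx2
      have h1 : e * (e * r) = e * r := by rw [← mul_assoc, he]
      have h2 : e * ((1 - e) * s) = 0 := by
        rw [← mul_assoc, mul_sub, mul_one, he, sub_self, zero_mul]
      rw [← h1, ← hs, h2]
    · rw [codisjoint_iff, eq_top_iff]
      intro x _
      have : x = e * x + (1 - e) * x := by rw [sub_mul, one_mul]; abel
      rw [this]
      exact Submodule.add_mem _
        (Submodule.mem_sup_left ((mem_span e _).mpr ⟨x, rfl⟩))
        (Submodule.mem_sup_right ((mem_span (1 - e) _).mpr ⟨x, rfl⟩))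
  have hBle : Submodule.span Rᵐᵒᵖ {(1 - e) * f} ≤ Submodule.span Rᵐᵒᵖ {1 - e} := by
    rw [Submodule.span_le, Set.singleton_subset_iff]
    exact (mem_span (1 - e) _).mpr ⟨f, rfl⟩
  have key : Submodule.span Rᵐᵒᵖ {e} ⊔ Submodule.span Rᵐᵒᵖ {f}
      = Submodule.span Rᵐᵒᵖ {e} ⊔ Submodule.span Rᵐᵒᵖ {(1 - e) * f} := by
    apply le_antisymm
    · apply sup_le le_sup_left
      rw [Submodule.span_le, Set.singleton_subset_iff]
      exact Submodule.mem_sup.mpr ⟨e * f, (mem_span e _).mpr ⟨f, rfl⟩,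
        (1 - e) * f, (mem_span ((1 - e) * f) _).mpr ⟨1, mul_one _⟩,
        by rw [sub_mul, one_mul]; abel⟩
    · apply sup_le le_sup_left
      rw [Submodule.span_le, Set.singleton_subset_iff]
      exact Submodule.mem_sup.mpr ⟨e * -f, (mem_span e _).mpr ⟨-f, rfl⟩,
        f, (mem_span f _).mpr ⟨1, mul_one _⟩,
        by rw [sub_mul, one_mul, mul_neg]; abel⟩
  rw [key]
  exact isSummand_sup_iff hcompl hBle
end

section
/- A ring R is right SSP (the sum of any two direct summands of R_R is a direct summand of R_R) if and only if for any two idempotents e and f of R, efR is a direct summand of R_R. -/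
section RightIdeal

open Submodule

variable {R : Type*} [Ring R]

theorem mem_span_singleton_op {e x : R} :
    x ∈ span Rᵐᵒᵖ {e} ↔ ∃ r : R, e * r = x := by
  simp only [mem_span_singleton, MulOpposite.op_surjective.exists, op_smul_eq_mul]

theorem mul_mem_span_singleton_op (e r : R) : e * r ∈ span Rᵐᵒᵖ {e} :=
  mem_span_singleton_op.2 ⟨r, rfl⟩

theorem span_singleton_op_le_iff {e f : R} : span Rᵐᵒᵖ {e} ≤ span Rᵐᵒᵖ {f} ↔ ∃ r, f * r = e :=
  (span_singleton_le_iff_mem _ _).trans mem_span_singleton_op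

theorem span_singleton_op_mul_le (e f : R) : span Rᵐᵒᵖ {e * f} ≤ span Rᵐᵒᵖ {e} :=
  span_singleton_op_le_iff.2 ⟨f, rfl⟩

theorem span_singleton_op_sup_eq_sup_one_sub_mul (e f : R) :
    span Rᵐᵒᵖ {e} ⊔ span Rᵐᵒᵖ {f} = span Rᵐᵒᵖ {e} ⊔ span Rᵐᵒᵖ {(1 - e) * f} := by
  refine le_antisymm (sup_le le_sup_left ?_) (sup_le le_sup_left ?_) <;>
    rw [span_singleton_le_iff_mem, mem_sup]
  · exact ⟨e * f, mul_mem_span_singleton_op e f, (1 - e) * f, mem_span_singleton_self _, by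
      noncomm_ring⟩
  · exact ⟨e * -f, mul_mem_span_singleton_op e _, f, mem_span_singleton_self f, by noncomm_ring⟩

theorem IsIdempotentElem.isCompl_span_singleton_op {e : R} (he : IsIdempotentElem e) :
    IsCompl (span Rᵐᵒᵖ {e}) (span Rᵐᵒᵖ {1 - e}) := by
  constructor
  · rw [disjoint_def]
    intro x hx hx'
    obtain ⟨r, rfl⟩ := mem_span_singleton_op.1 hx
    obtain ⟨s, hs⟩ := mem_span_singleton_op.1 hx'
    calc e * r = e * (e * r) := by rw [← mul_assoc, he.eq]
      _ = e * ((1 - e) * s) := by rw [hs]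
      _ = 0 := by rw [← mul_assoc, he.mul_one_sub_self, zero_mul]
  · rw [codisjoint_iff, eq_top_iff]
    intro x _
    exact mem_sup.2 ⟨e * x, mul_mem_span_singleton_op e x, (1 - e) * x,
      mul_mem_span_singleton_op _ x, by noncomm_ring⟩

theorem IsIdempotentElem.isSummand_span_singleton_op {e : R} (he : IsIdempotentElem e) :
    IsSummand (span Rᵐᵒᵖ {e}) :=
  ⟨_, he.isCompl_span_singleton_op⟩

theorem IsSummand.exists_isIdempotentElem_eq_span_singleton_op {p : Submodule Rᵐᵒᵖ R}
    (hp : IsSummand p) : ∃ e : R, IsIdempotentElem e ∧ p = span Rᵐᵒᵖ {e} := by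
  obtain ⟨q, hpq⟩ := hp
  obtain ⟨e, he, f, hf, hef⟩ := mem_sup.1 (hpq.codisjoint.eq_top ▸ mem_top : (1 : R) ∈ p ⊔ q)
  have mul_left_eq : ∀ x ∈ p, e * x = x := by
    intro x hx
    -- `x - ex = fx` lies in `p ∩ q = 0`
    have hfx : x - e * x = f * x := by rw [sub_eq_iff_eq_add', ← add_mul, hef, one_mul]
    refine (sub_eq_zero.1 (disjoint_def.1 hpq.disjoint _ ?_ ?_)).symm
    · exact p.sub_mem hx (by simpa only [op_smul_eq_mul] using p.smul_mem (.op x) he)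
    · rw [hfx]; simpa only [op_smul_eq_mul] using q.smul_mem (.op x) hf
  refine ⟨e, mul_left_eq e he, le_antisymm (fun x hx ↦ ?_) ((span_singleton_le_iff_mem _ _).2 he)⟩
  exact mul_left_eq x hx ▸ mul_mem_span_singleton_op e x

theorem span_singleton_op_sup_eq_add_of_mul_eq_zero {e h : R} (he : IsIdempotentElem e)
    (hh : IsIdempotentElem h) (heh : e * h = 0) (hhe : h * e = 0) :
    span Rᵐᵒᵖ {e} ⊔ span Rᵐᵒᵖ {h} = span Rᵐᵒᵖ {e + h} := by
  refine le_antisymm (sup_le ?_ ?_) ((span_singleton_le_iff_mem _ _).2 ?_)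
  · exact span_singleton_op_le_iff.2 ⟨e, by rw [add_mul, he.eq, hhe, add_zero]⟩
  · exact span_singleton_op_le_iff.2 ⟨h, by rw [add_mul, heh, hh.eq, zero_add]⟩
  · exact add_mem (mem_sup_left (mem_span_singleton_self e))
      (mem_sup_right (mem_span_singleton_self h))

theorem IsIdempotentElem.isSummand_sup_of_mul_eq_zero {e g : R} (he : IsIdempotentElem e)
    (hg : IsIdempotentElem g) (heg : e * g = 0) :
    IsSummand (span Rᵐᵒᵖ {e} ⊔ span Rᵐᵒᵖ {g}) := by
  have hg_left : (1 - e) * g = g := by rw [sub_mul, one_mul, heg, sub_zero]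
  set h := g * (1 - e)
  have hhg : h * g = g := by rw [mul_assoc, hg_left, hg.eq]
  have hh : IsIdempotentElem h := by
    change h * (g * (1 - e)) = h
    rw [← mul_assoc, hhg]
  have heh : e * h = 0 := by rw [← mul_assoc, heg, zero_mul]
  have hhe : h * e = 0 := by rw [mul_assoc, he.one_sub_mul_self, mul_zero]
  have hgh : span Rᵐᵒᵖ {g} = span Rᵐᵒᵖ {h} :=
    le_antisymm (span_singleton_op_le_iff.2 ⟨g, hhg⟩) (span_singleton_op_le_iff.2 ⟨1 - e, rfl⟩)
  rw [hgh, span_singleton_op_sup_eq_add_of_mul_eq_zero he hh heh hhe]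
  exact (he.add hh (by rw [heh, hhe, add_zero])).isSummand_span_singleton_op

end RightIdeal

/-- `R` is right SSP iff for all idempotents `e, f` of `R`, the right ideal `efR`
is a direct summand of `R_R`. -/
theorem stmt3 {R : Type*} [Ring R] :
    (∀ p q : Submodule Rᵐᵒᵖ R, IsSummand p → IsSummand q → IsSummand (p ⊔ q)) ↔
    (∀ e f : R, IsIdempotentElem e → IsIdempotentElem f →
      IsSummand (Submodule.span Rᵐᵒᵖ {e * f})) := by
  constructor
  · intro hSSP e f he hf
    obtain ⟨D, hD⟩ := hSSP _ _ he.one_sub.isSummand_span_singleton_op hf.isSummand_span_singleton_op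
    rw [span_singleton_op_sup_eq_sup_one_sub_mul, sub_sub_cancel, sup_comm] at hD
    have hdisj : Disjoint (Submodule.span Rᵐᵒᵖ {e * f}) (Submodule.span Rᵐᵒᵖ {1 - e}) :=
      he.isCompl_span_singleton_op.disjoint.mono_left (span_singleton_op_mul_le e f)
    exact ⟨_, hdisj.isCompl_sup_right_of_isCompl_sup_left hD⟩
  · intro hsummand p q hp hq
    obtain ⟨e, he, rfl⟩ := hp.exists_isIdempotentElem_eq_span_singleton_op
    obtain ⟨f, hf, rfl⟩ := hq.exists_isIdempotentElem_eq_span_singleton_op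
    obtain ⟨g, hg, hfg⟩ :=
      (hsummand (1 - e) f he.one_sub hf).exists_isIdempotentElem_eq_span_singleton_op
    obtain ⟨r, hr⟩ := mem_span_singleton_op.1 (hfg ▸ Submodule.mem_span_singleton_self g)
    have heg : e * g = 0 := by rw [← hr, ← mul_assoc, ← mul_assoc, he.mul_one_sub_self,
      zero_mul, zero_mul]
    rw [span_singleton_op_sup_eq_sup_one_sub_mul, hfg]
    exact he.isSummand_sup_of_mul_eq_zero hg heg
end

section
/- A ring R is right SSP if and only if it is left SSP. That is, the sum of any two direct summands of R as a right R-module is a direct summand if and only if the sum of any two direct summands of R as a left R-module is a direct summand. -/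
section Lattice

variable {α : Type*} [Lattice α] [BoundedOrder α]

theorem OrderIso.isComplemented_apply_iff {β : Type*} [Lattice β] [BoundedOrder β]
    (σ : α ≃o β) {a : α} : IsComplemented (σ a) ↔ IsComplemented a :=
  ⟨fun ⟨b, hb⟩ ↦ ⟨σ.symm b, by simpa using σ.symm.isCompl hb⟩, fun ⟨b, hb⟩ ↦ ⟨σ b, σ.isCompl hb⟩⟩

theorem OrderIso.supClosed_isComplemented_iff {β : Type*} [Lattice β] [BoundedOrder β]
    (σ : α ≃o β) :
    SupClosed {b : β | IsComplemented b} ↔ SupClosed {a : α | IsComplemented a} :=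
  ⟨fun h ↦ by simpa [Set.preimage, σ.isComplemented_apply_iff] using h.preimage σ,
    fun h ↦ by simpa [Set.preimage, σ.symm.isComplemented_apply_iff] using h.preimage σ.symm⟩

theorem IsCompl.isComplemented_sup_iff [IsModularLattice α] {a a' n : α} (h : IsCompl a a')
    (hn : n ≤ a') : IsComplemented (a ⊔ n) ↔ IsComplemented n := by
  constructor
  · rintro ⟨c, hc⟩
    refine ⟨a ⊔ c, disjoint_iff.mpr (eq_bot_iff.mpr ?_), ?_⟩
    · have : n ⊓ (a ⊔ c) ≤ a := calc
        n ⊓ (a ⊔ c) ≤ a ⊔ n ⊓ (a ⊔ c) := le_sup_right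
        _ = (a ⊔ n) ⊓ (a ⊔ c) := (sup_inf_assoc_of_le n le_sup_left).symm
        _ = a ⊔ c ⊓ (a ⊔ n) := by rw [inf_comm, sup_inf_assoc_of_le c le_sup_left]
        _ = a := by rw [hc.symm.disjoint.eq_bot, sup_bot_eq]
      exact h.disjoint.le_bot.trans' (le_inf this (inf_le_left.trans hn))
    · rw [codisjoint_iff, ← sup_assoc, sup_comm n, hc.codisjoint.eq_top]
  · rintro ⟨c, hc⟩
    refine ⟨a' ⊓ c, disjoint_iff.mpr ?_, codisjoint_iff.mpr ?_⟩
    · rw [← inf_assoc, sup_comm, sup_inf_assoc_of_le a hn, h.disjoint.eq_bot, sup_bot_eq,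
        hc.disjoint.eq_bot]
    · rw [sup_assoc, sup_comm n, inf_sup_assoc_of_le c hn, hc.symm.codisjoint.eq_top, inf_top_eq,
        h.codisjoint.eq_top]

end Lattice

def IdempotentProductsRegular (R : Type*) [Mul R] : Prop :=
  ∀ e f : R, IsIdempotentElem e → IsIdempotentElem f → ∃ b, f * e * b * (f * e) = f * e

section

variable {R : Type*} [Semigroup R]

theorem IdempotentProductsRegular.mulOpposite (h : IdempotentProductsRegular R) :
    IdempotentProductsRegular Rᵐᵒᵖ := by
  intro e f he hf
  obtain ⟨b, hb⟩ := h f.unop e.unop (congrArg MulOpposite.unop hf)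
    (congrArg MulOpposite.unop he)
  exact ⟨.op b, by simpa [mul_assoc] using congrArg MulOpposite.op hb⟩

theorem IdempotentProductsRegular.of_mulOpposite (h : IdempotentProductsRegular Rᵐᵒᵖ) :
    IdempotentProductsRegular R := by
  intro e f he hf
  obtain ⟨b, hb⟩ := h (.op f) (.op e) (congrArg MulOpposite.op hf)
    (congrArg MulOpposite.op he)
  exact ⟨b.unop, by simpa [mul_assoc] using congrArg MulOpposite.unop hb⟩

theorem idempotentProductsRegular_mulOpposite_iff :
    IdempotentProductsRegular Rᵐᵒᵖ ↔ IdempotentProductsRegular R :=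
  ⟨.of_mulOpposite, .mulOpposite⟩

end

namespace Submodule

variable {R : Type*} [Ring R]

theorem isCompl_span_singleton_one_sub {e : R} (he : IsIdempotentElem e) :
    IsCompl (span R {e}) (span R {1 - e}) := by
  refine ⟨disjoint_def.mpr fun x hx hx' ↦ ?_, codisjoint_iff.mpr (eq_top_iff.mpr fun x _ ↦ ?_)⟩
  · obtain ⟨r, rfl⟩ := mem_span_singleton.mp hx
    obtain ⟨s, hs⟩ := mem_span_singleton.mp hx'
    have : s • (1 - e) * e = 0 := by simp [mul_assoc, sub_mul, he.eq]
    rwa [hs, smul_eq_mul, mul_assoc, he.eq] at this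
  · have : x * e + x * (1 - e) = x := by noncomm_ring
    exact this ▸ add_mem_sup (mem_span_singleton.mpr ⟨x, rfl⟩) (mem_span_singleton.mpr ⟨x, rfl⟩)

theorem isComplemented_iff_exists_isIdempotentElem {p : Submodule R R} :
    IsComplemented p ↔ ∃ e, IsIdempotentElem e ∧ p = span R {e} := by
  refine ⟨fun ⟨q, h⟩ ↦ ?_, fun ⟨e, he, hp⟩ ↦ hp ▸ ⟨_, isCompl_span_singleton_one_sub he⟩⟩
  obtain ⟨f, hf, rfl⟩ := p.isIdempotentElemEquiv.symm (p.isComplEquivProj ⟨q, h⟩)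
  refine ⟨f 1, LinearMap.isIdempotentElem_map_one_iff.mpr hf, ?_⟩
  rw [← LinearMap.range_toSpanSingleton]
  congr
  ext
  simp

theorem isComplemented_span_singleton_iff {a : R} :
    IsComplemented (span R {a}) ↔ ∃ b, a * b * a = a := by
  rw [isComplemented_iff_exists_isIdempotentElem]
  constructor
  · rintro ⟨e, he, hae⟩
    obtain ⟨c, hc⟩ := mem_span_singleton.mp (hae ▸ mem_span_singleton_self a)
    obtain ⟨b, hb⟩ := mem_span_singleton.mp (hae ▸ mem_span_singleton_self e)
    refine ⟨b, ?_⟩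
    rw [smul_eq_mul] at hb hc
    rw [mul_assoc, hb, ← hc, mul_assoc, he.eq]
  · rintro ⟨b, hb⟩
    refine ⟨b * a, by rw [IsIdempotentElem, mul_assoc, ← mul_assoc a, hb], le_antisymm ?_ ?_⟩
    · exact span_singleton_le_iff_mem _ _ |>.mpr (mem_span_singleton.mpr ⟨a, by
        rw [smul_eq_mul, ← mul_assoc, hb]⟩)
    · exact span_singleton_le_iff_mem _ _ |>.mpr (smul_mem _ b (mem_span_singleton_self a))

theorem span_singleton_sup_span_singleton_mul_one_sub (e f : R) :
    span R {e} ⊔ span R {f * (1 - e)} = span R {e} ⊔ span R {f} := by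
  have he : f * e ∈ span R {e} := smul_mem _ f (mem_span_singleton_self e)
  refine le_antisymm (sup_le le_sup_left ?_) (sup_le le_sup_left ?_) <;>
    rw [span_singleton_le_iff_mem]
  · have : f * (1 - e) = f - f * e := by noncomm_ring
    exact this ▸ sub_mem (mem_sup_right (mem_span_singleton_self f)) (mem_sup_left he)
  · have : f * (1 - e) + f * e = f := by noncomm_ring
    simpa only [this] using
      add_mem (mem_sup_right (mem_span_singleton_self (f * (1 - e)))) (mem_sup_left he)

theorem supClosed_isComplemented_iff :
    SupClosed {p : Submodule R R | IsComplemented p} ↔ IdempotentProductsRegular R := by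
  have mul_mem_span {e : R} (f : R) : span R {f * e} ≤ span R {e} :=
    (span_singleton_le_iff_mem _ _).mpr (smul_mem _ f (mem_span_singleton_self e))
  constructor
  · intro h e f he hf
    have hsup : IsComplemented (span R {1 - e} ⊔ span R {f}) :=
      h (isComplemented_iff_exists_isIdempotentElem.mpr ⟨_, he.one_sub, rfl⟩)
        (isComplemented_iff_exists_isIdempotentElem.mpr ⟨f, hf, rfl⟩)
    rwa [← span_singleton_sup_span_singleton_mul_one_sub, sub_sub_cancel,
      (isCompl_span_singleton_one_sub he).symm.isComplemented_sup_iff (mul_mem_span f),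
      isComplemented_span_singleton_iff] at hsup
  · intro h p hp q hq
    obtain ⟨e, he, rfl⟩ := isComplemented_iff_exists_isIdempotentElem.mp hp
    obtain ⟨f, hf, rfl⟩ := isComplemented_iff_exists_isIdempotentElem.mp hq
    rw [Set.mem_ofPred_eq, ← span_singleton_sup_span_singleton_mul_one_sub,
      (isCompl_span_singleton_one_sub he).isComplemented_sup_iff (mul_mem_span f),
      isComplemented_span_singleton_iff]
    exact h (1 - e) f he.one_sub hf

end Submodule

theorem forall_isSummand_sup_iff_supClosed {R M : Type*} [Ring R] [AddCommGroup M] [Module R M] :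
    (∀ p q : Submodule R M, IsSummand p → IsSummand q → IsSummand (p ⊔ q)) ↔
      SupClosed {p : Submodule R M | IsComplemented p} :=
  ⟨fun h _ hp _ hq ↦ h _ _ hp hq, fun h _ _ hp hq ↦ h hp hq⟩

/-- `R` is right SSP iff `R` is left SSP. -/
theorem stmt4 {R : Type*} [Ring R] :
    (∀ p q : Submodule Rᵐᵒᵖ R, IsSummand p → IsSummand q → IsSummand (p ⊔ q)) ↔
    (∀ p q : Submodule R R, IsSummand p → IsSummand q → IsSummand (p ⊔ q)) := by
  let σ : Submodule Rᵐᵒᵖ R ≃o Submodule Rᵐᵒᵖ Rᵐᵒᵖ :=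
    Submodule.orderIsoMapComap (MulOpposite.opLinearEquiv Rᵐᵒᵖ)
  rw [forall_isSummand_sup_iff_supClosed, forall_isSummand_sup_iff_supClosed,
    ← σ.supClosed_isComplemented_iff, Submodule.supClosed_isComplemented_iff,
    Submodule.supClosed_isComplemented_iff, idempotentProductsRegular_mulOpposite_iff]
end

section
/- Every abelian ring (a ring whose idempotents are all central) is right SSP. -/
/-- The set `{x | g * x = x}` is an `Rᵐᵒᵖ`-submodule of `R`. -/
def fixSubmodule {R : Type*} [Ring R] (g : R) : Submodule Rᵐᵒᵖ R where
  carrier := {x | g * x = x}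
  add_mem' := by intro a b ha hb; simp only [Set.mem_setOf_eq] at *; rw [mul_add, ha, hb]
  zero_mem' := by simp
  smul_mem' := by
    intro r x hx
    simp only [Set.mem_setOf_eq, MulOpposite.smul_eq_mul_unop] at *
    rw [← mul_assoc, hx]

/-- The set `{x | g * x = 0}` is an `Rᵐᵒᵖ`-submodule of `R`. -/
def annSubmodule {R : Type*} [Ring R] (g : R) : Submodule Rᵐᵒᵖ R where
  carrier := {x | g * x = 0}
  add_mem' := by intro a b ha hb; simp only [Set.mem_setOf_eq] at *; rw [mul_add, ha, hb, add_zero]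
  zero_mem' := by simp
  smul_mem' := by
    intro r x hx
    simp only [Set.mem_setOf_eq, MulOpposite.smul_eq_mul_unop] at *
    rw [← mul_assoc, hx, zero_mul]

lemma summand_idem {R : Type*} [Ring R] {p q : Submodule Rᵐᵒᵖ R} (h : IsCompl p q) :
    ∃ e : R, IsIdempotentElem e ∧ ∀ x : R, x ∈ p ↔ e * x = x := by
  have h1 : (1 : R) ∈ p ⊔ q := by rw [h.sup_eq_top]; trivial
  obtain ⟨e, he, f, hf, hef⟩ := Submodule.mem_sup.1 h1
  have hmemp : ∀ x : R, e * x ∈ p := fun x => by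
    have := p.smul_mem (MulOpposite.op x) he
    simpa [MulOpposite.smul_eq_mul_unop] using this
  have hmemq : ∀ x : R, f * x ∈ q := fun x => by
    have := q.smul_mem (MulOpposite.op x) hf
    simpa [MulOpposite.smul_eq_mul_unop] using this
  have main : ∀ x : R, x ∈ p → e * x = x := by
    intro x hx
    have h2 : x - e * x ∈ p := p.sub_mem hx (hmemp x)
    have h3 : x - e * x ∈ q := by
      have hfx : f * x = x - e * x := by
        have h4 : e * x + f * x = x := by rw [← add_mul, hef, one_mul]
        exact eq_sub_of_add_eq' h4
      rw [← hfx]; exact hmemq x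
    have h0 : x - e * x = 0 := (Submodule.disjoint_def.1 h.disjoint) _ h2 h3
    rw [← sub_eq_zero]; rw [← neg_sub]; rw [h0, neg_zero]
  exact ⟨e, main e he, fun x => ⟨main x, fun hx => hx ▸ hmemp x⟩⟩

lemma idem_combine {R : Type*} [Ring R] {e f : R} (he : e * e = e) (hf : f * f = f)
    (hc : e * f = f * e) : (e + f - e * f) * (e + f - e * f) = e + f - e * f := by
  have h2 : f * (f * e) = f * e := by rw [← mul_assoc, hf]
  have h8 : f * e * e = f * e := by rw [mul_assoc, he]
  have h9 : f * e * f = f * e := by rw [mul_assoc, ← hc, ← mul_assoc, ← hc, mul_assoc, hf]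
  have h10 : f * e * (f * e) = f * e := by rw [← mul_assoc, h9, h8]
  simp only [mul_sub, sub_mul, mul_add, add_mul, he, hf, hc, h2, h8, h9, h10, ← mul_assoc]
  abel

/-- Every abelian ring (all idempotents central) is right SSP. -/
theorem stmt6 {R : Type*} [Ring R]
    (hab : ∀ e : R, IsIdempotentElem e → ∀ x : R, e * x = x * e) :
    ∀ p q : Submodule Rᵐᵒᵖ R, IsSummand p → IsSummand q → IsSummand (p ⊔ q) := by
  rintro p q ⟨p', hp⟩ ⟨q', hq⟩
  obtain ⟨e, he, hpe⟩ := summand_idem hp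
  obtain ⟨f, hf, hqf⟩ := summand_idem hq
  have hcomm : e * f = f * e := hab e he f
  set g : R := e + f - e * f with hg
  have hge : g * g = g := idem_combine he hf hcomm
  have hsup : p ⊔ q = fixSubmodule g := by
    apply le_antisymm
    · apply sup_le
      · intro x hx
        have hx' : e * x = x := (hpe x).1 hx
        show g * x = x
        have hefx : e * f * x = f * x := by rw [hcomm, mul_assoc, hx']
        rw [hg, sub_mul, add_mul, hx', hefx]
        abel
      · intro x hx
        have hx' : f * x = x := (hqf x).1 hx
        show g * x = x
        have hefx : e * f * x = e * x := by rw [mul_assoc, hx']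
        rw [hg, sub_mul, add_mul, hefx, hx']
        abel
    · intro x hx
      have hx' : g * x = x := hx
      refine Submodule.mem_sup.2 ⟨e * x, (hpe _).2 ?_, x - e * x, (hqf _).2 ?_, by abel⟩
      · rw [← mul_assoc, he]
      · have hfex2 : f * (e * x) = e * (f * x) := by
          rw [← mul_assoc, ← hcomm, mul_assoc]
        have this1 : e * x + f * x - e * (f * x) = x := by
          have h5 : (e + f - e * f) * x = x := hx'
          rw [sub_mul, add_mul, mul_assoc] at h5
          exact h5
        have hdec : x = e * x + (f * x - f * (e * x)) := by
          calc x = e * x + f * x - e * (f * x) := this1.symm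
          _ = e * x + (f * x - f * (e * x)) := by rw [hfex2]; abel
        rw [mul_sub]
        nth_rewrite 3 [hdec]
        abel
  rw [hsup]
  refine ⟨annSubmodule g, ?_, ?_⟩
  · rw [disjoint_iff]
    ext x
    simp only [Submodule.mem_inf, Submodule.mem_bot]
    constructor
    · rintro ⟨h1, h2⟩
      have h1' : g * x = x := h1
      have h2' : g * x = 0 := h2
      rw [h2'] at h1'; exact h1'.symm
    · rintro rfl; exact ⟨(fixSubmodule g).zero_mem, (annSubmodule g).zero_mem⟩
  · rw [codisjoint_iff, eq_top_iff]
    intro x _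
    refine Submodule.mem_sup.2 ⟨g * x, ?_, x - g * x, ?_, by abel⟩
    · show g * (g * x) = g * x
      rw [← mul_assoc, hge]
    · show g * (x - g * x) = 0
      rw [mul_sub, ← mul_assoc, hge, sub_self]
end

section
/- Every commutative ring with identity is SSP: the sum of any two direct summands of R as an R-module is a direct summand. -/
lemma summand_exists_idem {R : Type*} [CommRing R] {p : Submodule R R}
    (h : IsSummand p) : ∃ e : R, IsIdempotentElem e ∧ p = Ideal.span {e} := by
  obtain ⟨q, hc⟩ := h
  have h1 : (1 : R) ∈ p ⊔ q := by rw [hc.sup_eq_top]; trivial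
  obtain ⟨e, he, f, hf, hef⟩ := Submodule.mem_sup.mp h1
  have hmul0 : ∀ x ∈ p, x * f = 0 := by
    intro x hx
    have h1 : x * f ∈ p := mul_comm f x ▸ p.smul_mem f hx
    have h2 : x * f ∈ q := q.smul_mem x hf
    have := hc.disjoint.le_bot ⟨h1, h2⟩
    simpa using this
  have hee : IsIdempotentElem e := by
    have : e * e + e * f = e := by rw [← mul_add, hef, mul_one]
    rw [hmul0 e he, add_zero] at this
    exact this
  refine ⟨e, hee, le_antisymm ?_ ?_⟩
  · intro x hx
    have : x * e + x * f = x := by rw [← mul_add, hef, mul_one]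
    rw [hmul0 x hx, add_zero] at this
    rw [← this]
    exact Ideal.mem_span_singleton'.mpr ⟨x, rfl⟩
  · rw [Ideal.span_singleton_le_iff_mem]; exact he

lemma idem_summand {R : Type*} [CommRing R] {e : R} (he : IsIdempotentElem e) :
    IsSummand (Ideal.span {e} : Submodule R R) := by
  refine ⟨Ideal.span {1 - e}, ?_, ?_⟩
  · rw [disjoint_iff_inf_le]
    rintro x ⟨hx1, hx2⟩
    obtain ⟨a, rfl⟩ := Ideal.mem_span_singleton'.mp hx1
    obtain ⟨b, hb⟩ := Ideal.mem_span_singleton'.mp hx2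
    have : a * e * e = b * (1 - e) * e := by rw [hb]
    rw [mul_assoc, he, mul_assoc, sub_mul, one_mul, he.eq, sub_self, mul_zero] at this
    simpa using this
  · rw [codisjoint_iff_le_sup]
    intro x _
    have : x = x * e + x * (1 - e) := by ring
    rw [this]
    exact Submodule.add_mem_sup (Ideal.mem_span_singleton'.mpr ⟨x, rfl⟩)
      (Ideal.mem_span_singleton'.mpr ⟨x, rfl⟩)

/-- Every commutative ring is SSP: the sum of any two direct summands of `R`
as an `R`-module is a direct summand. -/
theorem stmt7 {R : Type*} [CommRing R] :
    ∀ p q : Submodule R R, IsSummand p → IsSummand q → IsSummand (p ⊔ q) := by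
  intro p q hp hq
  obtain ⟨e, he, rfl⟩ := summand_exists_idem hp
  obtain ⟨f, hf, rfl⟩ := summand_exists_idem hq
  have hg : IsIdempotentElem (e + f - e * f) := by
    unfold IsIdempotentElem
    linear_combination (1 + f * f - 2 * f) * he.eq + (1 - e) * hf.eq
  have hsup : (Ideal.span {e} ⊔ Ideal.span {f} : Submodule R R)
      = Ideal.span {e + f - e * f} := by
    apply le_antisymm
    · apply sup_le <;> rw [Ideal.span_singleton_le_iff_mem] <;>
        rw [Ideal.mem_span_singleton']
      · exact ⟨e, by rw [mul_sub, mul_add, ← mul_assoc, he.eq]; ring⟩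
      · exact ⟨f, by rw [mul_sub, mul_add, mul_comm f (e*f), mul_assoc, hf.eq]; ring⟩
    · rw [Ideal.span_singleton_le_iff_mem]
      have : e + f - e * f = e + f * (1 - e) := by ring
      rw [this]
      exact Submodule.add_mem_sup (Ideal.mem_span_singleton'.mpr ⟨1, one_mul e⟩)
        (Ideal.mem_span_singleton'.mpr ⟨1 - e, mul_comm _ _⟩)
  rw [hsup]
  exact idem_summand hg
end

section
/- If a module M is C3 (whenever N and K are direct summands of M with N ∩ K = 0, then N + K is a direct summand) and has the SIP (the intersection of any two direct summands is a direct summand), then M has the SSP (the sum of any two direct summands is a direct summand). -/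
/-- If a module `M` is C3 and has the SIP, then `M` has the SSP. -/
theorem stmt8 {R M : Type*} [Ring R] [AddCommGroup M] [Module R M]
    (hC3 : ∀ N K : Submodule R M, IsSummand N → IsSummand K → N ⊓ K = ⊥ →
      IsSummand (N ⊔ K))
    (hSIP : ∀ N K : Submodule R M, IsSummand N → IsSummand K → IsSummand (N ⊓ K)) :
    ∀ N K : Submodule R M, IsSummand N → IsSummand K → IsSummand (N ⊔ K) := by
  intro N K hN hK
  obtain ⟨L, hL⟩ := hSIP N K hN hK
  have hLsum : IsSummand L := ⟨N ⊓ K, hL.symm⟩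
  have hKL : IsSummand (K ⊓ L) := hSIP K L hK hLsum
  have hdisj : N ⊓ (K ⊓ L) = ⊥ := by
    rw [← inf_assoc]
    exact hL.disjoint.eq_bot
  have hk : (N ⊓ K) ⊔ (K ⊓ L) = K := by
    rw [inf_comm K L, ← sup_inf_assoc_of_le L inf_le_right, hL.codisjoint.eq_top,
      top_inf_eq]
  have hsup : N ⊔ (K ⊓ L) = N ⊔ K := by
    conv_rhs => rw [← hk]
    rw [← sup_assoc, sup_eq_left.mpr (inf_le_left : N ⊓ K ≤ N)]
  rw [← hsup]
  exact hC3 N (K ⊓ L) hN hKL hdisj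
end

section
/- If a ring R is SSP (the sum of any two direct summands of R_R is a direct summand), then R is right SIP: the intersection of any two direct summands of R as a right R-module is a direct summand. -/
/-!
A direct summand of `R_R` is `eR` for an idempotent `e`, and `eR ∩ fR` is the right annihilator
of `1 - e` and `a := (1 - f) e`. Writing the idempotent generating `eR + fR` as `u + v` with
`u ∈ eR`, `v ∈ fR` and multiplying `a = (u + v) a` by `1 - f` gives `a = a u a`. Hence
`t := u a` is an idempotent with the same right annihilator as `a` and with `t (1 - e) = 0`,
and the common right annihilator of `1 - e` and `t` is `(1 - s)R` for the idempotent
`s := (1 - e) + t - (1 - e) t`.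
-/

section RingTheory

variable {R : Type*} [Ring R]

theorem IsIdempotentElem.mul_add_sub_mul_eq_left {n : R} (hn : IsIdempotentElem n) (t : R) :
    n * (n + t - n * t) = n := by
  rw [mul_sub, mul_add, ← mul_assoc, hn.eq, add_sub_cancel_right]

theorem IsIdempotentElem.mul_add_sub_mul_eq_right {n t : R} (ht : IsIdempotentElem t)
    (htn : t * n = 0) : t * (n + t - n * t) = t := by
  rw [mul_sub, mul_add, ← mul_assoc, htn, ht.eq, zero_mul, zero_add, sub_zero]

theorem IsIdempotentElem.add_sub_mul_of_mul_eq_zero {n t : R} (hn : IsIdempotentElem n)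
    (ht : IsIdempotentElem t) (htn : t * n = 0) : IsIdempotentElem (n + t - n * t) := by
  change (n + t - n * t) * (n + t - n * t) = _
  rw [sub_mul, add_mul, hn.mul_add_sub_mul_eq_left, ht.mul_add_sub_mul_eq_right htn, mul_assoc,
    ht.mul_add_sub_mul_eq_right htn]

theorem IsIdempotentElem.add_sub_mul_mul_eq_zero_iff {n t : R} (hn : IsIdempotentElem n)
    (ht : IsIdempotentElem t) (htn : t * n = 0) (x : R) :
    (n + t - n * t) * x = 0 ↔ n * x = 0 ∧ t * x = 0 := by
  refine ⟨fun hx => ⟨?_, ?_⟩, fun ⟨hnx, htx⟩ => ?_⟩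
  · rw [← hn.mul_add_sub_mul_eq_left t, mul_assoc, hx, mul_zero]
  · rw [← ht.mul_add_sub_mul_eq_right htn, mul_assoc, hx, mul_zero]
  · rw [sub_mul, add_mul, hnx, htx, mul_assoc, htx, mul_zero, add_zero, sub_zero]

theorem isIdempotentElem_mul_of_mul_mul_eq_self {a y : R} (h : a * y * a = a) :
    IsIdempotentElem (y * a) := by
  change y * a * (y * a) = y * a
  rw [← mul_assoc, mul_assoc y a y, mul_assoc y (a * y) a, h]

theorem mul_eq_zero_iff_of_mul_mul_eq_self {a y : R} (h : a * y * a = a) (x : R) :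
    y * a * x = 0 ↔ a * x = 0 := by
  refine ⟨fun hx => ?_, fun hx => by rw [mul_assoc, hx, mul_zero]⟩
  calc a * x = a * (y * a * x) := by rw [← mul_assoc, ← mul_assoc, h]
    _ = 0 := by rw [hx, mul_zero]

end RingTheory

namespace Submodule

variable {R : Type*} [Ring R] {p q : Submodule Rᵐᵒᵖ R}

theorem mul_mem_right {x : R} (r : R) (hx : x ∈ p) : x * r ∈ p :=
  p.smul_mem (MulOpposite.op r) hx

theorem exists_mem_forall_mem_iff_mul_eq_self (hp : IsSummand p) :
    ∃ e ∈ p, ∀ x : R, x ∈ p ↔ e * x = x := by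
  obtain ⟨q, hpq⟩ := hp
  obtain ⟨e, he, e', he', hee'⟩ :=
    mem_sup.mp (hpq.codisjoint.eq_top ▸ mem_top : (1 : R) ∈ p ⊔ q)
  refine ⟨e, he, fun x => ⟨fun hx => ?_, fun hx => hx ▸ mul_mem_right x he⟩⟩
  have hsplit : e * x + e' * x = x := by rw [← add_mul, hee', one_mul]
  have he'x : e' * x = 0 :=
    disjoint_def.mp hpq.disjoint _ (eq_sub_of_add_eq' hsplit ▸ p.sub_mem hx (mul_mem_right x he))
      (mul_mem_right x he')
  rwa [he'x, add_zero] at hsplit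

theorem isSummand_of_forall_mem_iff_mul_eq_zero {s : R} (hs : IsIdempotentElem s)
    (hp : ∀ x : R, x ∈ p ↔ s * x = 0) : IsSummand p := by
  refine ⟨span Rᵐᵒᵖ {s}, disjoint_def.mpr fun x hxp hxs => ?_, codisjoint_iff.mpr ?_⟩
  · obtain ⟨r, rfl⟩ := mem_span_singleton.mp hxs
    have h := (hp _).mp hxp
    rwa [MulOpposite.smul_eq_mul_unop, ← mul_assoc, hs.eq] at h
  · refine eq_top_iff'.mpr fun x => mem_sup.mpr ⟨x - s * x, (hp _).mpr ?_, s * x,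
      mem_span_singleton.mpr ⟨MulOpposite.op x, rfl⟩, sub_add_cancel x _⟩
    rw [mul_sub, ← mul_assoc, hs.eq, sub_self]

variable {e f : R} (hp : ∀ x : R, x ∈ p ↔ e * x = x) (hq : ∀ x : R, x ∈ q ↔ f * x = x)
include hp hq

theorem mem_inf_iff_one_sub_mul_eq_zero (x : R) :
    x ∈ p ⊓ q ↔ (1 - e) * x = 0 ∧ (1 - f) * e * x = 0 := by
  rw [mem_inf, hp, hq]
  constructor
  · rintro ⟨hex, hfx⟩
    exact ⟨by rw [sub_mul, one_mul, hex, sub_self],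
      by rw [mul_assoc, hex, sub_mul, one_mul, hfx, sub_self]⟩
  · rintro ⟨h1, h2⟩
    rw [sub_mul, one_mul, sub_eq_zero] at h1
    rw [mul_assoc, ← h1, sub_mul, one_mul, sub_eq_zero] at h2
    exact ⟨h1.symm, h2.symm⟩

theorem exists_one_sub_mul_mul_eq_self (he : e ∈ p) (hf : f ∈ q) (hpq : IsSummand (p ⊔ q)) :
    ∃ u, (1 - f) * e * u * ((1 - f) * e) = (1 - f) * e := by
  obtain ⟨g, hg, hg'⟩ := exists_mem_forall_mem_iff_mul_eq_self hpq
  obtain ⟨u, hu, v, hv, rfl⟩ := mem_sup.mp hg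
  have ha : (1 - f) * e ∈ p ⊔ q := by
    rw [sub_mul, one_mul]
    exact sub_mem (mem_sup_left he) (mem_sup_right (mul_mem_right e hf))
  have hfv : (1 - f) * v = 0 := by
    rw [sub_mul, one_mul, ← (hq v).mp hv, ← mul_assoc, (hq f).mp hf, sub_self]
  refine ⟨u, ?_⟩
  calc (1 - f) * e * u * ((1 - f) * e) = (1 - f) * (u + v) * ((1 - f) * e) := by
        rw [mul_add, add_mul, hfv, zero_mul, add_zero, mul_assoc (1 - f) e, (hp u).mp hu]
    _ = (1 - f) * ((1 - f) * e) := by rw [mul_assoc, (hg' _).mp ha]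
    _ = (1 - f) * e := by rw [← mul_assoc, (IsIdempotentElem.one_sub ((hq f).mp hf)).eq]

end Submodule

/-- If `R` is SSP (sums of direct summands of `R_R` are direct summands),
then `R` is right SIP. -/
theorem stmt9 {R : Type*} [Ring R]
    (hSSP : ∀ p q : Submodule Rᵐᵒᵖ R, IsSummand p → IsSummand q → IsSummand (p ⊔ q)) :
    ∀ p q : Submodule Rᵐᵒᵖ R, IsSummand p → IsSummand q → IsSummand (p ⊓ q) := by
  intro p q hp hq
  obtain ⟨e, he, hpe⟩ := Submodule.exists_mem_forall_mem_iff_mul_eq_self hp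
  obtain ⟨f, hf, hqf⟩ := Submodule.exists_mem_forall_mem_iff_mul_eq_self hq
  obtain ⟨u, hreg⟩ := Submodule.exists_one_sub_mul_mul_eq_self hpe hqf he hf (hSSP p q hp hq)
  set a := (1 - f) * e
  have hn : IsIdempotentElem (1 - e) := IsIdempotentElem.one_sub ((hpe e).mp he)
  have ht : IsIdempotentElem (u * a) := isIdempotentElem_mul_of_mul_mul_eq_self hreg
  have htn : u * a * (1 - e) = 0 := by
    rw [mul_one_sub, mul_assoc, mul_assoc, (hpe e).mp he, sub_self]
  refine Submodule.isSummand_of_forall_mem_iff_mul_eq_zero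
    (hn.add_sub_mul_of_mul_eq_zero ht htn) fun x => ?_
  rw [hn.add_sub_mul_mul_eq_zero_iff ht htn, Submodule.mem_inf_iff_one_sub_mul_eq_zero hpe hqf,
    mul_eq_zero_iff_of_mul_mul_eq_self hreg]
end

section
/- A ring R is SSP if and only if R is right C3 and right SIP. -/
section Aux

variable {A M : Type*} [Ring A] [AddCommGroup M] [Module A M]

/-- If `X` and `Y` are disjoint and `X ⊔ Y` has a complement `W`, then `Y ⊔ W` is a
complement of `X`. -/
lemma isCompl_of_disjoint_of_isCompl_sup {X Y W : Submodule A M}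
    (hd : Disjoint X Y) (h : IsCompl (X ⊔ Y) W) : IsCompl X (Y ⊔ W) := by
  constructor
  · rw [Submodule.disjoint_def]
    intro x hx hx'
    obtain ⟨y, hy, w, hw, hyw⟩ := Submodule.mem_sup.mp hx'
    have hwXY : w ∈ X ⊔ Y := by
      have : w = x - y := by
        rw [← hyw]; abel
      rw [this]
      exact Submodule.sub_mem _ (Submodule.mem_sup_left hx) (Submodule.mem_sup_right hy)
    have hw0 : w = 0 := Submodule.disjoint_def.mp h.disjoint w hwXY hw
    have hxy : x = y := by rw [← hyw, hw0, add_zero]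
    exact Submodule.disjoint_def.mp hd x hx (hxy ▸ hy)
  · rw [codisjoint_iff, ← sup_assoc]
    exact codisjoint_iff.mp h.codisjoint

lemma isSummand_of_disjoint_of_isSummand_sup {X Y : Submodule A M}
    (hd : Disjoint X Y) (h : IsSummand (X ⊔ Y)) : IsSummand X := by
  obtain ⟨W, hW⟩ := h
  exact ⟨Y ⊔ W, isCompl_of_disjoint_of_isCompl_sup hd hW⟩

end Aux

/-- `R` is SSP iff `R` is right C3 and right SIP. -/
theorem stmt10 {R : Type*} [Ring R] :
    (∀ p q : Submodule Rᵐᵒᵖ R, IsSummand p → IsSummand q → IsSummand (p ⊔ q)) ↔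
    ((∀ p q : Submodule Rᵐᵒᵖ R, IsSummand p → IsSummand q → p ⊓ q = ⊥ →
        IsSummand (p ⊔ q)) ∧
      (∀ p q : Submodule Rᵐᵒᵖ R, IsSummand p → IsSummand q → IsSummand (p ⊓ q))) := by
  constructor
  · intro hssp
    refine ⟨fun p q hp hq _ => hssp p q hp hq, fun p q hp hq => ?_⟩
    -- SSP implies SIP
    obtain ⟨q', hq'⟩ := hq
    -- π : projection onto q' along q
    set π : R →ₗ[Rᵐᵒᵖ] R :=
      q'.subtype ∘ₗ Submodule.linearProjOfIsCompl q' q hq'.symm with hπdef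
    have hπmem : ∀ x : R, π x ∈ q' := fun x =>
      (Submodule.linearProjOfIsCompl q' q hq'.symm x).2
    have hπker : ∀ x : R, π x = 0 ↔ x ∈ q := by
      intro x
      rw [hπdef]
      simp only [LinearMap.comp_apply, Submodule.subtype_apply, ZeroMemClass.coe_eq_zero]
      exact Submodule.linearProjOfIsCompl_apply_eq_zero_iff hq'.symm
    have hsub : ∀ x : R, x - π x ∈ q := by
      intro x
      have h1 := Submodule.projection_add_projection_eq_self hq'.symm x
      have h2 : x - π x =
          (q.linearProjOfIsCompl q' hq'.symm.symm x : R) := by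
        rw [hπdef]
        simp only [LinearMap.comp_apply, Submodule.subtype_apply]
        rw [sub_eq_iff_eq_add']
        exact h1.symm
      rw [h2]
      exact (q.linearProjOfIsCompl q' hq'.symm.symm x).2
    set X : Submodule Rᵐᵒᵖ R := Submodule.map π p with hXdef
    have hXq' : X ≤ q' := by
      rintro _ ⟨y, _, rfl⟩
      exact hπmem y
    have hXsup : X ⊔ q = p ⊔ q := by
      apply le_antisymm
      · apply sup_le _ le_sup_right
        rintro _ ⟨y, hy, rfl⟩
        rw [show π y = y - (y - π y) by abel]
        exact Submodule.sub_mem _ (Submodule.mem_sup_left hy)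
          (Submodule.mem_sup_right (hsub y))
      · apply sup_le _ le_sup_right
        intro y hy
        rw [show y = π y + (y - π y) by abel]
        exact Submodule.add_mem _
          (Submodule.mem_sup_left ⟨y, hy, rfl⟩)
          (Submodule.mem_sup_right (hsub y))
    have hXdisj : Disjoint X q := Disjoint.mono_left hXq' hq'.disjoint.symm
    have hXsummand : IsSummand X := by
      apply isSummand_of_disjoint_of_isSummand_sup hXdisj
      rw [hXsup]
      exact hssp p q hp ⟨q', hq'⟩
    obtain ⟨Xc, hXc⟩ := hXsummand
    haveI : Module.Free Rᵐᵒᵖ R :=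
      Module.Free.of_equiv (MulOpposite.opLinearEquiv Rᵐᵒᵖ (M := R)).symm
    haveI : Module.Projective Rᵐᵒᵖ X :=
      Module.Projective.of_split X.subtype (Submodule.linearProjOfIsCompl X Xc hXc)
        (Submodule.linearProjOfIsCompl_comp_subtype hXc)
    -- the restriction of π to p, as a surjection onto X
    set g : p →ₗ[Rᵐᵒᵖ] X :=
      LinearMap.codRestrict X (π ∘ₗ p.subtype)
        (fun x => ⟨(x : R), x.2, rfl⟩) with hgdef
    have hgval : ∀ x : p, (g x : R) = π (x : R) := fun x => rfl
    have hgsurj : Function.Surjective g := by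
      rintro ⟨_, y, hy, rfl⟩
      exact ⟨⟨y, hy⟩, rfl⟩
    obtain ⟨σ, hσ⟩ := Module.projective_lifting_property g LinearMap.id hgsurj
    have hσval : ∀ w : X, g (σ w) = w := fun w => by
      have := congrFun (congrArg (fun f => f.toFun) hσ) w
      simpa using this
    set S : Submodule Rᵐᵒᵖ R := Submodule.map p.subtype (LinearMap.range σ) with hSdef
    have hdisjS : Disjoint (p ⊓ q) S := by
      rw [Submodule.disjoint_def]
      rintro x ⟨hxp, hxq⟩ ⟨u, ⟨w, rfl⟩, hux⟩
      have hgx : g ⟨x, hxp⟩ = 0 := by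
        apply Subtype.ext
        rw [hgval]
        exact (hπker x).mpr hxq
      have hxw : (⟨x, hxp⟩ : p) = σ w := Subtype.ext hux.symm
      have hw0 : w = 0 := by
        rw [← hσval w, ← hxw, hgx]
      rw [← hux, hw0, map_zero]
      rfl
    have hsupS : (p ⊓ q) ⊔ S = p := by
      apply le_antisymm
      · exact sup_le inf_le_left (by rintro _ ⟨u, _, rfl⟩; exact u.2)
      · intro x hx
        set w : X := g ⟨x, hx⟩ with hwdef
        have hyS : ((σ w : p) : R) ∈ S := ⟨σ w, ⟨w, rfl⟩, rfl⟩
        have hπeq : π ((σ w : p) : R) = π x := by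
          have h1 : (g (σ w) : R) = (g ⟨x, hx⟩ : R) := by rw [hσval w]
          rw [hgval, hgval] at h1
          exact h1
        have hq1 : x - ((σ w : p) : R) ∈ q := by
          have h2 : π (x - ((σ w : p) : R)) = 0 := by
            rw [map_sub, hπeq, sub_self]
          exact (hπker _).mp h2
        have hmem : x - ((σ w : p) : R) ∈ p ⊓ q :=
          ⟨Submodule.sub_mem _ hx (σ w).2, hq1⟩
        rw [show x = (x - ((σ w : p) : R)) + ((σ w : p) : R) by abel]
        exact Submodule.add_mem _ (Submodule.mem_sup_left hmem)
          (Submodule.mem_sup_right hyS)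
    apply isSummand_of_disjoint_of_isSummand_sup hdisjS
    rw [hsupS]
    exact hp
  · rintro ⟨hC3, hSIP⟩ p q hp hq
    obtain ⟨d, hd⟩ := hSIP p q hp hq
    obtain ⟨q', hq'⟩ := hq
    set C : Submodule Rᵐᵒᵖ R := q ⊓ d with hCdef
    have hqeq : (p ⊓ q) ⊔ C = q := by
      have h1 : ((p ⊓ q) ⊔ d) ⊓ q = (p ⊓ q) ⊔ (d ⊓ q) :=
        sup_inf_assoc_of_le d inf_le_right
      rw [codisjoint_iff.mp hd.codisjoint, top_inf_eq] at h1
      rw [hCdef, inf_comm q d, ← h1]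
    have hCdisj : Disjoint C (p ⊓ q) :=
      Disjoint.mono_left inf_le_right hd.disjoint.symm
    have hCsummand : IsSummand C := by
      apply isSummand_of_disjoint_of_isSummand_sup hCdisj
      rw [sup_comm, hqeq]
      exact ⟨q', hq'⟩
    have hbot : p ⊓ C = ⊥ := by
      rw [hCdef, inf_comm q d, ← inf_assoc, inf_comm p d, inf_assoc, inf_comm d,
        disjoint_iff.mp hd.disjoint]
    have hsup : p ⊔ C = p ⊔ q := by
      apply le_antisymm
      · exact sup_le le_sup_left (le_trans inf_le_left le_sup_right)
      · refine sup_le le_sup_left ?_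
        rw [← hqeq]
        exact sup_le (le_trans inf_le_left le_sup_left) le_sup_right
    rw [← hsup]
    exact hC3 p C hp hCsummand hbot
end

section
/- For idempotents e, f, g of a ring R with f, g ∈ eRe and fR + gR = hR for some idempotent h ∈ R, the element ehe is an idempotent of eRe and f(eRe) + g(eRe) = ehe(eRe). -/
/-- For idempotents `e, f, g, h` of `R` with `f, g ∈ eRe` and `fR + gR = hR`,
the element `ehe` is an idempotent of `eRe` and `f(eRe) + g(eRe) = ehe(eRe)`. -/
theorem stmt12 {R : Type*} [Ring R] (e f g h : R)
    (he : IsIdempotentElem e) (hf : IsIdempotentElem f) (hg : IsIdempotentElem g)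
    (hh : IsIdempotentElem h)
    (hfe : e * f * e = f) (hge : e * g * e = g)
    (hsum : Submodule.span Rᵐᵒᵖ {f} ⊔ Submodule.span Rᵐᵒᵖ {g} =
      Submodule.span Rᵐᵒᵖ ({h} : Set R)) :
    IsIdempotentElem (e * h * e) ∧
    {x : R | ∃ s t : R, x = f * (e * s * e) + g * (e * t * e)} =
      {x : R | ∃ u : R, x = (e * h * e) * (e * u * e)} := by
  have hee : e * e = e := he
  have E : ∀ r : R, e * (e * r) = e * r := fun r => by rw [← mul_assoc, hee]
  have hef : e * f = f := by
    conv_lhs => rw [← hfe]; rw [← mul_assoc, ← mul_assoc, hee]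
    rw [hfe]
  have hfe' : f * e = f := by
    conv_lhs => rw [← hfe]; rw [mul_assoc, mul_assoc, hee, ← mul_assoc]
    rw [hfe]
  have heg : e * g = g := by
    conv_lhs => rw [← hge]; rw [← mul_assoc, ← mul_assoc, hee]
    rw [hge]
  have hge' : g * e = g := by
    conv_lhs => rw [← hge]; rw [mul_assoc, mul_assoc, hee, ← mul_assoc]
    rw [hge]
  have EF : ∀ r : R, e * (f * r) = f * r := fun r => by rw [← mul_assoc, hef]
  have FE : ∀ r : R, f * (e * r) = f * r := fun r => by rw [← mul_assoc, hfe']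
  have EG : ∀ r : R, e * (g * r) = g * r := fun r => by rw [← mul_assoc, heg]
  have GE : ∀ r : R, g * (e * r) = g * r := fun r => by rw [← mul_assoc, hge']
  have HH : ∀ r : R, h * (h * r) = h * r := fun r => by rw [← mul_assoc, hh]
  have hmem : h ∈ Submodule.span Rᵐᵒᵖ {f} ⊔ Submodule.span Rᵐᵒᵖ {g} := by
    rw [hsum]; exact Submodule.mem_span_singleton_self h
  obtain ⟨y, hy, z, hz, hyz⟩ := Submodule.mem_sup.mp hmem
  obtain ⟨a, ha⟩ := Submodule.mem_span_singleton.mp hy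
  obtain ⟨b, hb⟩ := Submodule.mem_span_singleton.mp hz
  have ha' : y = f * a.unop := by rw [← ha]; rfl
  have hb' : z = g * b.unop := by rw [← hb]; rfl
  have heh : e * h = h := by
    rw [← hyz, ha', hb', mul_add]
    simp only [EF, EG]
  have EH : ∀ r : R, e * (h * r) = h * r := fun r => by rw [← mul_assoc, heh]
  constructor
  · show (e * h * e) * (e * h * e) = e * h * e
    simp only [mul_assoc, E, EH, HH]
  · ext x
    simp only [Set.mem_setOf_eq]
    constructor
    · rintro ⟨s, t, rfl⟩
      set x := f * (e * s * e) + g * (e * t * e) with hx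
      have hxmem : x ∈ Submodule.span Rᵐᵒᵖ ({h} : Set R) := by
        rw [← hsum]
        refine Submodule.add_mem _ (Submodule.mem_sup_left ?_)
          (Submodule.mem_sup_right ?_)
        · exact Submodule.mem_span_singleton.mpr ⟨MulOpposite.op (e * s * e), rfl⟩
        · exact Submodule.mem_span_singleton.mpr ⟨MulOpposite.op (e * t * e), rfl⟩
      obtain ⟨c, hc⟩ := Submodule.mem_span_singleton.mp hxmem
      have hc' : x = h * c.unop := by rw [← hc]; rfl
      have hhx : h * x = x := by rw [hc', ← mul_assoc, hh]
      have hex : e * x = x := by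
        rw [hx, mul_add]
        simp only [EF, EG]
      have hxe : x * e = x := by
        rw [hx, add_mul]
        simp only [mul_assoc, hee]
      refine ⟨x, ?_⟩
      simp only [mul_assoc, E, EH, hxe, hex, hhx]
    · rintro ⟨u, rfl⟩
      set x := (e * h * e) * (e * u * e) with hx
      have hx' : x = h * (e * u * e) := by
        rw [hx]
        simp only [mul_assoc, E, EH]
      have hxmem : x ∈ Submodule.span Rᵐᵒᵖ {f} ⊔ Submodule.span Rᵐᵒᵖ {g} := by
        rw [hsum]
        exact Submodule.mem_span_singleton.mpr ⟨MulOpposite.op (e * u * e), by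
          simp [hx', MulOpposite.smul_eq_mul_unop]⟩
      obtain ⟨y', hy', z', hz', hyz'⟩ := Submodule.mem_sup.mp hxmem
      obtain ⟨a', ha2⟩ := Submodule.mem_span_singleton.mp hy'
      obtain ⟨b', hb2⟩ := Submodule.mem_span_singleton.mp hz'
      have ha2' : y' = f * a'.unop := by rw [← ha2]; rfl
      have hb2' : z' = g * b'.unop := by rw [← hb2]; rfl
      have hex : e * x = x := by rw [hx']; simp only [mul_assoc, EH]
      have hxe : x * e = x := by rw [hx']; simp only [mul_assoc, hee]
      refine ⟨a'.unop, b'.unop, ?_⟩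
      have hxd : x = e * (y' + z') * e := by rw [hyz', mul_assoc, hxe, hex]
      rw [hxd, ha2', hb2']
      simp only [mul_add, add_mul, mul_assoc, EF, EG, FE, GE]
end

section
/- A ring R is von Neumann regular if and only if the 2×2 matrix ring M₂(R) is SSP (the sum of any two direct summands of M₂(R) as a right module over itself is a direct summand). -/
open Submodule

def IsVonNeumannRegular {S : Type*} [Mul S] (a : S) : Prop :=
  ∃ b, a = a * b * a

theorem IsVonNeumannRegular.of_sub_mul_mul {S : Type*} [Ring S] {x y : S}
    (h : IsVonNeumannRegular (x - x * y * x)) : IsVonNeumannRegular x := by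
  obtain ⟨w, hw⟩ := h
  refine ⟨y + (1 - y * x) * w * (1 - x * y), ?_⟩
  calc x = x * y * x + (x - x * y * x) := by abel
    _ = x * y * x + (x - x * y * x) * w * (x - x * y * x) := by rw [← hw]
    _ = x * (y + (1 - y * x) * w * (1 - x * y)) * x := by noncomm_ring

theorem IsSummand.inf_of_isCompl {R M : Type*} [Ring R] [AddCommGroup M] [Module R M]
    {p q t : Submodule R M} (ht : IsSummand t) (hpq : IsCompl p q) (hpt : p ≤ t) :
    IsSummand (t ⊓ q) := by
  obtain ⟨t', htt'⟩ := ht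
  have ht_inf : t ⊓ (p ⊔ t') = p := by
    rw [sup_comm, ← inf_sup_assoc_of_le _ hpt, htt'.inf_eq_bot, bot_sup_eq]
  have hsup : t ⊓ q ⊔ p = t := by
    rw [sup_comm, inf_comm, ← sup_inf_assoc_of_le _ hpt, hpq.sup_eq_top, top_inf_eq]
  refine ⟨p ⊔ t', disjoint_iff.2 ?_, codisjoint_iff.2 ?_⟩
  · rw [inf_right_comm, ht_inf, hpq.inf_eq_bot]
  · rw [← sup_assoc, hsup, htt'.sup_eq_top]

namespace RightIdeal

variable {S : Type*} [Ring S]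

theorem mem_span_singleton {x y : S} : y ∈ Sᵐᵒᵖ ∙ x ↔ ∃ s, x * s = y :=
  Submodule.mem_span_singleton.trans ⟨fun ⟨s, h⟩ => ⟨s.unop, h⟩, fun ⟨s, h⟩ => ⟨.op s, h⟩⟩

theorem mul_mem_span_singleton (x s : S) : x * s ∈ Sᵐᵒᵖ ∙ x :=
  mem_span_singleton.2 ⟨s, rfl⟩

theorem mem_span_singleton_of_isIdempotentElem {e y : S} (he : IsIdempotentElem e) :
    y ∈ Sᵐᵒᵖ ∙ e ↔ e * y = y := by
  refine ⟨fun h => ?_, fun h => h ▸ mul_mem_span_singleton e y⟩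
  obtain ⟨s, rfl⟩ := mem_span_singleton.1 h
  rw [← mul_assoc, he.eq]

theorem isCompl_span_singleton_one_sub {e : S} (he : IsIdempotentElem e) :
    IsCompl (Sᵐᵒᵖ ∙ e) (Sᵐᵒᵖ ∙ (1 - e)) := by
  refine ⟨disjoint_def.2 fun y hy hy' => ?_, codisjoint_iff.2 (eq_top_iff.2 fun y _ => ?_)⟩
  · rw [mem_span_singleton_of_isIdempotentElem he] at hy
    rw [mem_span_singleton_of_isIdempotentElem he.one_sub] at hy'
    calc y = (1 - e) * (e * y) := by rw [hy, hy']
      _ = 0 := by rw [← mul_assoc, he.one_sub_mul_self, zero_mul]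
  · rw [show y = e * y + (1 - e) * y by noncomm_ring]
    exact add_mem_sup (mul_mem_span_singleton _ _) (mul_mem_span_singleton _ _)

theorem isSummand_span_singleton {e : S} (he : IsIdempotentElem e) : IsSummand (Sᵐᵒᵖ ∙ e) :=
  ⟨_, isCompl_span_singleton_one_sub he⟩

theorem isSummand_iff {p : Submodule Sᵐᵒᵖ S} :
    IsSummand p ↔ ∃ e, IsIdempotentElem e ∧ p = Sᵐᵒᵖ ∙ e := by
  refine ⟨fun ⟨q, hpq⟩ => ?_, fun ⟨e, he, hp⟩ => hp ▸ isSummand_span_singleton he⟩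
  obtain ⟨e, he, f, hf, hef⟩ := mem_sup.1 (hpq.sup_eq_top ▸ mem_top : (1 : S) ∈ p ⊔ q)
  have mul_mem (z : Submodule Sᵐᵒᵖ S) {x : S} (hx : x ∈ z) (y : S) : x * y ∈ z :=
    z.smul_mem (.op y) hx
  -- `x = e * x + f * x` and `f * x = x - e * x` lies in `p ⊓ q = ⊥`
  have h_fix {x : S} (hx : x ∈ p) : e * x = x := by
    have hfx : f * x = x - e * x := by rw [eq_sub_iff_add_eq', ← add_mul, hef, one_mul]
    have : f * x = 0 :=
      disjoint_def.1 hpq.disjoint _ (hfx ▸ p.sub_mem hx (mul_mem p he x)) (mul_mem q hf x)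
    rw [this, eq_comm, sub_eq_zero] at hfx
    exact hfx.symm
  refine ⟨e, h_fix he, le_antisymm (fun x hx => ?_) ((span_singleton_le_iff_mem _ _).2 he)⟩
  exact h_fix hx ▸ mul_mem_span_singleton e x

theorem isVonNeumannRegular_iff_isSummand {x : S} :
    IsVonNeumannRegular x ↔ IsSummand (Sᵐᵒᵖ ∙ x) := by
  rw [isSummand_iff]
  constructor
  · rintro ⟨y, hy⟩
    refine ⟨x * y, by rw [IsIdempotentElem, ← mul_assoc, ← hy], le_antisymm ?_ ?_⟩
    · have := mul_mem_span_singleton (x * y) x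
      rw [← hy] at this
      exact (span_singleton_le_iff_mem _ _).2 this
    · exact (span_singleton_le_iff_mem _ _).2 (mul_mem_span_singleton x y)
  · rintro ⟨e, he, hxe⟩
    obtain ⟨y, rfl⟩ := mem_span_singleton.1 (hxe ▸ mem_span_singleton_self e : e ∈ Sᵐᵒᵖ ∙ x)
    have : x * y * x = x :=
      (mem_span_singleton_of_isIdempotentElem he).1 (hxe ▸ mem_span_singleton_self x)
    exact ⟨y, this.symm⟩

theorem span_singleton_sup_eq_sup_sub_mul (e x : S) :
    (Sᵐᵒᵖ ∙ e) ⊔ (Sᵐᵒᵖ ∙ x) = (Sᵐᵒᵖ ∙ e) ⊔ (Sᵐᵒᵖ ∙ (x - e * x)) := by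
  have hex (t : S) : e * x ∈ (Sᵐᵒᵖ ∙ e) ⊔ (Sᵐᵒᵖ ∙ t) := mem_sup_left (mul_mem_span_singleton e x)
  apply le_antisymm <;> refine sup_le le_sup_left ((span_singleton_le_iff_mem _ _).2 ?_)
  · have h := add_mem (mem_sup_right (mem_span_singleton_self (x - e * x))) (hex (x - e * x))
    rwa [sub_add_cancel] at h
  · exact sub_mem (mem_sup_right (mem_span_singleton_self x)) (hex x)

section Orthogonal

variable {e f : S}

theorem add_sub_mul_mul_left (he : IsIdempotentElem e) : (e + f - f * e) * e = e := by
  rw [sub_mul, add_mul, mul_assoc, he.eq, add_sub_cancel_right]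

theorem add_sub_mul_mul_right (hf : IsIdempotentElem f) (hef : e * f = 0) :
    (e + f - f * e) * f = f := by
  rw [sub_mul, add_mul, mul_assoc, hef, mul_zero, hf.eq, zero_add, sub_zero]

theorem isIdempotentElem_add_sub_mul (he : IsIdempotentElem e) (hf : IsIdempotentElem f)
    (hef : e * f = 0) : IsIdempotentElem (e + f - f * e) := by
  rw [IsIdempotentElem, mul_sub, mul_add, ← mul_assoc, add_sub_mul_mul_left he,
    add_sub_mul_mul_right hf hef]

theorem span_singleton_sup_eq_add_sub_mul (he : IsIdempotentElem e) (hf : IsIdempotentElem f)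
    (hef : e * f = 0) : (Sᵐᵒᵖ ∙ e) ⊔ (Sᵐᵒᵖ ∙ f) = Sᵐᵒᵖ ∙ (e + f - f * e) := by
  apply le_antisymm
  · refine sup_le ((span_singleton_le_iff_mem _ _).2 ?_) ((span_singleton_le_iff_mem _ _).2 ?_)
    · have h := mul_mem_span_singleton (e + f - f * e) e
      rwa [add_sub_mul_mul_left he] at h
    · have h := mul_mem_span_singleton (e + f - f * e) f
      rwa [add_sub_mul_mul_right hf hef] at h
  · rw [span_singleton_le_iff_mem, add_sub_assoc, show f - f * e = f * (1 - e) by noncomm_ring]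
    exact add_mem_sup (mem_span_singleton_self e) (mul_mem_span_singleton f _)

end Orthogonal

theorem isSummand_span_singleton_sup_iff {e : S} (he : IsIdempotentElem e) (x : S) :
    IsSummand ((Sᵐᵒᵖ ∙ e) ⊔ (Sᵐᵒᵖ ∙ x)) ↔ IsVonNeumannRegular (x - e * x) := by
  have hez : e * (x - e * x) = 0 := by rw [mul_sub, ← mul_assoc, he.eq, sub_self]
  rw [span_singleton_sup_eq_sup_sub_mul, isVonNeumannRegular_iff_isSummand]
  set z := x - e * x
  constructor
  · intro h
    have hz : Sᵐᵒᵖ ∙ z ≤ Sᵐᵒᵖ ∙ (1 - e) := by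
      rw [span_singleton_le_iff_mem, mem_span_singleton_of_isIdempotentElem he.one_sub, sub_mul,
        hez, one_mul, sub_zero]
    have := h.inf_of_isCompl (isCompl_span_singleton_one_sub he) le_sup_left
    rwa [sup_comm, sup_inf_assoc_of_le _ hz, (isCompl_span_singleton_one_sub he).inf_eq_bot,
      sup_bot_eq] at this
  · intro h
    obtain ⟨f, hf, hzf⟩ := isSummand_iff.1 h
    obtain ⟨s, rfl⟩ := mem_span_singleton.1 (hzf ▸ mem_span_singleton_self f : f ∈ Sᵐᵒᵖ ∙ z)
    have hef : e * (z * s) = 0 := by rw [← mul_assoc, hez, zero_mul]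
    rw [hzf, span_singleton_sup_eq_add_sub_mul he hf hef]
    exact isSummand_span_singleton (isIdempotentElem_add_sub_mul he hf hef)

theorem isSummand_sup_of_isVonNeumannRegular (hreg : ∀ a : S, IsVonNeumannRegular a)
    {p q : Submodule Sᵐᵒᵖ S} (hp : IsSummand p) (hq : IsSummand q) : IsSummand (p ⊔ q) := by
  obtain ⟨e, he, rfl⟩ := isSummand_iff.1 hp
  obtain ⟨f, -, rfl⟩ := isSummand_iff.1 hq
  exact (isSummand_span_singleton_sup_iff he f).2 (hreg _)

end RightIdeal

theorem exists_mul_add_mul_right_identity {R : Type*} [Ring R]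
    (hreg : ∀ a : R, IsVonNeumannRegular a) (p q : R) :
    ∃ α β : R, p * (α * p + β * q) = p ∧ q * (α * p + β * q) = q := by
  obtain ⟨x, hx⟩ := hreg p
  obtain ⟨y, hy⟩ := hreg (q - q * x * p)
  refine ⟨x - (1 - x * p) * y * (q * x), (1 - x * p) * y, ?_, ?_⟩ <;>
    rw [show (x - (1 - x * p) * y * (q * x)) * p + (1 - x * p) * y * q
      = x * p + (1 - x * p) * y * (q - q * x * p) by noncomm_ring]
  · calc p * (x * p + (1 - x * p) * y * (q - q * x * p))
        = p * x * p + (p - p * x * p) * y * (q - q * x * p) := by noncomm_ring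
      _ = p := by rw [← hx, sub_self, zero_mul, zero_mul, add_zero]
  · calc q * (x * p + (1 - x * p) * y * (q - q * x * p))
        = q * x * p + (q - q * x * p) * y * (q - q * x * p) := by noncomm_ring
      _ = q := by rw [← hy, add_sub_cancel]

namespace Matrix

variable {R : Type*} [Ring R]

theorem isVonNeumannRegular_of_mul_single_self (hreg : ∀ a : R, IsVonNeumannRegular a)
    {u : Matrix (Fin 2) (Fin 2) R} (j : Fin 2) (hu : u * single j j 1 = u) :
    IsVonNeumannRegular u := by
  obtain ⟨α, β, hp, hq⟩ := exists_mul_add_mul_right_identity hreg (u 0 j) (u 1 j)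
  have hcol (i k : Fin 2) (hk : k ≠ j) : u i k = 0 := by
    simpa [hk] using (congrFun (congrFun hu i) k).symm
  have entry (i k : Fin 2) : (u * (single j 0 α + single j 1 β) * u : Matrix _ _ R) i k
      = u i j * (α * u 0 k + β * u 1 k) := by
    fin_cases j <;> simp [mul_apply, Fin.sum_univ_two, single_apply, mul_add, mul_assoc]
  refine ⟨single j 0 α + single j 1 β, ext fun i k => ?_⟩
  rw [entry]
  by_cases hk : k = j
  · subst hk
    fin_cases i
    exacts [hp.symm, hq.symm]
  · simp [hcol _ k hk]

theorem isVonNeumannRegular_fin_two (hreg : ∀ a : R, IsVonNeumannRegular a)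
    (A : Matrix (Fin 2) (Fin 2) R) : IsVonNeumannRegular A := by
  set E : Matrix (Fin 2) (Fin 2) R := single 0 0 1
  obtain ⟨y, hy⟩ := isVonNeumannRegular_of_mul_single_self hreg (u := A * E) 0
    (by rw [mul_assoc, single_mul_single_same, mul_one])
  refine IsVonNeumannRegular.of_sub_mul_mul (y := E * y) ?_
  refine isVonNeumannRegular_of_mul_single_self hreg 1 ?_
  -- `(A - AEyA)E = AE - (AE)y(AE) = 0`, so `A - AEyA` is supported in the second column
  have hE : single 1 1 1 = 1 - E := by
    ext i k
    fin_cases i <;> fin_cases k <;> simp [E]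
  rw [hE, mul_sub, mul_one, sub_eq_self, sub_mul, sub_eq_zero]
  simpa only [mul_assoc] using hy

theorem isVonNeumannRegular_of_single {n : Type*} [Fintype n] [DecidableEq n] (i j : n) (a : R)
    (h : IsVonNeumannRegular (single i j a)) : IsVonNeumannRegular a := by
  obtain ⟨B, hB⟩ := h
  refine ⟨B j i, ?_⟩
  simpa using congrFun (congrFun hB i) j

end Matrix

open RightIdeal Matrix in
/-- `R` is von Neumann regular iff the `2 × 2` matrix ring `M₂(R)` is SSP. -/
theorem stmt13 {R : Type*} [Ring R] :
    (∀ a : R, ∃ b : R, a = a * b * a) ↔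
    (∀ p q : Submodule (Matrix (Fin 2) (Fin 2) R)ᵐᵒᵖ (Matrix (Fin 2) (Fin 2) R),
      IsSummand p → IsSummand q → IsSummand (p ⊔ q)) := by
  refine ⟨fun hreg _ _ => isSummand_sup_of_isVonNeumannRegular (isVonNeumannRegular_fin_two hreg),
    fun hssp a => ?_⟩
  set e : Matrix (Fin 2) (Fin 2) R := single 0 0 1
  set x : Matrix (Fin 2) (Fin 2) R := single 1 0 a
  have he : IsIdempotentElem e := by simp [IsIdempotentElem, e]
  have hf : IsIdempotentElem (e + x) := by simp [IsIdempotentElem, e, x, mul_add, add_mul]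
  have h := hssp _ _ (isSummand_span_singleton he) (isSummand_span_singleton hf)
  have hx : e + x - e * (e + x) = x := by simp [e, x, mul_add]
  rw [isSummand_span_singleton_sup_iff he, hx] at h
  exact isVonNeumannRegular_of_single 1 0 a h
end

section
/- The ring M₂(ℤ) of 2×2 integer matrices is not SSP: there exist two direct summands of M₂(ℤ) as a right module over itself whose sum is not a direct summand. -/
open LinearMap MulOpposite

instance Matrix.instIsAddTorsionFree {m n R : Type*} [AddMonoid R] [IsAddTorsionFree R] :
    IsAddTorsionFree (Matrix m n R) :=
  inferInstanceAs (IsAddTorsionFree (m → n → R))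

theorem IsSummand.eq_top_of_nsmul_mem {R M : Type*} [Ring R] [AddCommGroup M] [Module R M]
    [IsAddTorsionFree M] {p : Submodule R M} (hp : IsSummand p) {n : ℕ} (hn : n ≠ 0)
    (h : ∀ x, n • x ∈ p) : p = ⊤ := by
  obtain ⟨q, hpq⟩ := hp
  suffices q = ⊥ from eq_top_of_isCompl_bot (this ▸ hpq)
  refine (Submodule.eq_bot_iff q).2 fun x hx => nsmul_right_injective hn ?_
  have hmem : n • x ∈ p ⊓ q := ⟨h x, q.nsmul_mem hx n⟩
  rwa [hpq.inf_eq_bot, Submodule.mem_bot, ← nsmul_zero n] at hmem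

section RightIdeal

variable {R : Type*} [Ring R]

theorem IsSummand.eq_top_of_natCast_mem [IsAddTorsionFree R] {I : Submodule Rᵐᵒᵖ R}
    (hI : IsSummand I) {n : ℕ} (hn : n ≠ 0) (h : (n : R) ∈ I) : I = ⊤ :=
  hI.eq_top_of_nsmul_mem hn fun x => by
    simpa [nsmul_eq_mul] using I.smul_mem (op x) h

theorem isSummand_range_mulLeft {e : R} (he : IsIdempotentElem e) :
    IsSummand (range (mulLeft Rᵐᵒᵖ e)) :=
  ⟨_, IsIdempotentElem.isCompl <| LinearMap.ext fun x => by simp [← mul_assoc, he.eq]⟩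

end RightIdeal

section TwoByTwo

local notation "M₂ℤ" => Matrix (Fin 2) (Fin 2) ℤ

theorem isIdempotentElem_fin_two_lowerLeft {R : Type*} [Ring R] (a : R) :
    IsIdempotentElem !![1, 0; a, 0] := by
  simp [IsIdempotentElem]

theorem two_mem_range_mulLeft_sup :
    (2 : M₂ℤ) ∈
      range (mulLeft (M₂ℤ)ᵐᵒᵖ !![1, 0; 0, 0]) ⊔ range (mulLeft (M₂ℤ)ᵐᵒᵖ !![1, 0; 2, 0]) :=
  Submodule.mem_sup.2
    ⟨_, mem_range_self _ !![2, -1; 0, 0], _, mem_range_self _ !![0, 1; 0, 0], by decide⟩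

theorem one_notMem_range_mulLeft_sup :
    (1 : M₂ℤ) ∉
      range (mulLeft (M₂ℤ)ᵐᵒᵖ !![1, 0; 0, 0]) ⊔ range (mulLeft (M₂ℤ)ᵐᵒᵖ !![1, 0; 2, 0]) := by
  intro h
  obtain ⟨_, ⟨Y, rfl⟩, _, ⟨X, rfl⟩, hsum⟩ := Submodule.mem_sup.1 h
  have h11 := congrFun (congrFun hsum 1) 1
  simp [Matrix.vecMul, dotProduct] at h11
  omega

end TwoByTwo

/-- `M₂(ℤ)` is not SSP: there are two direct summands of `M₂(ℤ)` as a right module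
over itself whose sum is not a direct summand. -/
theorem stmt15 :
    ∃ p q : Submodule (Matrix (Fin 2) (Fin 2) ℤ)ᵐᵒᵖ (Matrix (Fin 2) (Fin 2) ℤ),
      IsSummand p ∧ IsSummand q ∧ ¬ IsSummand (p ⊔ q) := by
  refine ⟨_, _, isSummand_range_mulLeft (isIdempotentElem_fin_two_lowerLeft (0 : ℤ)),
    isSummand_range_mulLeft (isIdempotentElem_fin_two_lowerLeft 2), fun h => ?_⟩
  apply one_notMem_range_mulLeft_sup
  rw [h.eq_top_of_natCast_mem two_ne_zero (by exact_mod_cast two_mem_range_mulLeft_sup)]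
  exact Submodule.mem_top
end

section
/- Let M be a right R-module. If M ⊕ M is a C3 module, then M is a C2 module: every submodule of M isomorphic to a direct summand of M is itself a direct summand of M. -/
/-! The graph `{(l, e⁻¹ l) : l ∈ L}` of the inverse of `e : K ≃ L` is a summand of `M ⊕ M`, since
`L` is one; it meets the summand `M ⊕ 0` trivially and together with it spans `M ⊕ K`. So C3
makes `M ⊕ K` a summand of `M ⊕ M`, and then `K` is a summand of `M`. -/

open LinearMap Submodule

section Summands

variable {R M N : Type*} [Ring R] [AddCommGroup M] [Module R M] [AddCommGroup N] [Module R N]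

theorem isSummand_iff_exists_retraction {p : Submodule R M} :
    IsSummand p ↔ ∃ r : M →ₗ[R] p, ∀ x : p, r x = x :=
  ⟨fun ⟨q, h⟩ => ⟨p.projectionOnto q h, projectionOnto_apply_left h⟩,
    fun ⟨_, hr⟩ => ⟨_, isCompl_of_proj hr⟩⟩

theorem Submodule.isCompl_prod {p p' : Submodule R M} {q q' : Submodule R N}
    (hp : IsCompl p p') (hq : IsCompl q q') : IsCompl (p.prod q) (p'.prod q') := by
  constructor
  · rw [disjoint_iff, prod_inf_prod, hp.inf_eq_bot, hq.inf_eq_bot, prod_bot]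
  · rw [codisjoint_iff, prod_sup_prod, hp.sup_eq_top, hq.sup_eq_top, prod_top]

theorem isSummand_top_prod_bot : IsSummand ((⊤ : Submodule R M).prod (⊥ : Submodule R N)) :=
  ⟨_, isCompl_prod isCompl_top_bot isCompl_bot_top⟩

theorem IsSummand.of_prod_right {p : Submodule R M} {q : Submodule R N}
    (h : IsSummand (p.prod q)) : IsSummand q := by
  obtain ⟨r, hr⟩ := isSummand_iff_exists_retraction.mp h
  refine isSummand_iff_exists_retraction.mpr
    ⟨(snd R M N ∘ₗ (p.prod q).subtype ∘ₗ r ∘ₗ inr R M N).codRestrict q fun y => (r (0, y)).2.2,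
      fun y => ?_⟩
  ext
  exact congrArg (fun z : p.prod q => (z : M × N).2) (hr ⟨(0, y), p.zero_mem, y.2⟩)

variable {p : Submodule R M} (f : p →ₗ[R] N)

theorem IsSummand.range_subtype_prod (hp : IsSummand p) : IsSummand (range (p.subtype.prod f)) := by
  obtain ⟨r, hr⟩ := isSummand_iff_exists_retraction.mp hp
  refine isSummand_iff_exists_retraction.mpr
    ⟨(p.subtype.prod f).rangeRestrict ∘ₗ r ∘ₗ fst R M N, ?_⟩
  rintro ⟨_, x, rfl⟩
  ext <;> simp [hr]

theorem disjoint_range_subtype_prod_top_prod_bot (hf : Function.Injective f) :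
    Disjoint (range (p.subtype.prod f)) ((⊤ : Submodule R M).prod ⊥) := by
  rw [disjoint_iff, eq_bot_iff]
  rintro _ ⟨⟨x, rfl⟩, -, hx⟩
  have : x = 0 := hf (by simpa using hx)
  simp [this]

theorem range_subtype_prod_sup_top_prod_bot :
    range (p.subtype.prod f) ⊔ (⊤ : Submodule R M).prod ⊥ = (⊤ : Submodule R M).prod (range f) := by
  apply le_antisymm
  · rw [sup_le_iff]
    constructor
    · rintro _ ⟨x, rfl⟩
      exact ⟨trivial, x, rfl⟩
    · exact prod_mono le_top bot_le
  · rintro ⟨y, _⟩ ⟨-, x, rfl⟩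
    refine mem_sup.mpr ⟨_, ⟨x, rfl⟩, (y - x, 0), ⟨trivial, rfl⟩, ?_⟩
    simp

end Summands

/-- If `M ⊕ M` is a C3 module, then `M` is a C2 module: every submodule of `M`
isomorphic to a direct summand of `M` is itself a direct summand of `M`. -/
theorem stmt16 {R M : Type*} [Ring R] [AddCommGroup M] [Module R M]
    (hC3 : ∀ N K : Submodule R (M × M), IsSummand N → IsSummand K → N ⊓ K = ⊥ →
      IsSummand (N ⊔ K)) :
    ∀ K L : Submodule R M, IsSummand L → Nonempty (K ≃ₗ[R] L) → IsSummand K := by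
  rintro K L hL ⟨e⟩
  set f : L →ₗ[R] M := K.subtype ∘ₗ e.symm.toLinearMap
  have hf : Function.Injective f := K.injective_subtype.comp e.symm.injective
  have hrange : range f = K := by simp [f, range_comp]
  have h := hC3 _ _ (hL.range_subtype_prod f) isSummand_top_prod_bot
    (disjoint_range_subtype_prod_top_prod_bot f hf).eq_bot
  rw [range_subtype_prod_sup_top_prod_bot, hrange] at h
  exact h.of_prod_right
end

section
/- A ring R is semisimple if and only if the countable direct sum R^(ℕ) of copies of R, as a right R-module, has the SSP (the sum of any two direct summands is a direct summand). -/
open Submodule LinearMap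

def HasSSP (A M : Type*) [Ring A] [AddCommGroup M] [Module A M] : Prop :=
  ∀ p q : Submodule A M, IsSummand p → IsSummand q → IsSummand (p ⊔ q)

section

variable {A M N : Type*} [Ring A] [AddCommGroup M] [Module A M] [AddCommGroup N] [Module A N]

theorem HasSSP.of_linearEquiv (e : M ≃ₗ[A] N) (H : HasSSP A M) : HasSSP A N := by
  rintro p q ⟨p', hp⟩ ⟨q', hq⟩
  let φ := orderIsoMapComap e.symm
  obtain ⟨c, hc⟩ := H (φ p) (φ q) ⟨φ p', φ.isCompl hp⟩ ⟨φ q', φ.isCompl hq⟩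
  refine ⟨φ.symm c, ?_⟩
  simpa only [φ.symm.map_sup, OrderIso.symm_apply_apply] using φ.symm.isCompl hc

theorem IsSummand.fg [Module.Finite A M] {p : Submodule A M} (hp : IsSummand p) : p.FG :=
  have ⟨_, h⟩ := hp
  CoFG.of_finite.fg_of_isCompl h.symm

theorem IsSummand.of_comap {g : M →ₗ[A] N} (hg : Function.Surjective g) {S : Submodule A N}
    (h : IsSummand (S.comap g)) : IsSummand S := by
  obtain ⟨C, hC⟩ := h
  refine ⟨C.map g, .of_eq (eq_bot_iff.2 ?_) (eq_top_iff.2 ?_)⟩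
  · rintro _ ⟨hS, c, hc, rfl⟩
    have : c ∈ S.comap g ⊓ C := ⟨hS, hc⟩
    rw [hC.inf_eq_bot, mem_bot] at this
    simp [this]
  · intro n _
    obtain ⟨m, rfl⟩ := hg n
    obtain ⟨a, ha, c, hc, rfl⟩ := mem_sup.1 (hC.sup_eq_top ▸ mem_top : m ∈ S.comap g ⊔ C)
    rw [map_add]
    exact add_mem_sup ha (mem_map_of_mem hc)

theorem isCompl_graph_range_inr (f : M →ₗ[A] N) : IsCompl (graph f) (range (inr A M N)) := by
  refine .of_eq (eq_bot_iff.2 ?_) (eq_top_iff.2 fun x _ => mem_sup.2 ?_)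
  · rintro _ ⟨hx, n, rfl⟩
    simp_all [mem_graph_iff]
  · exact ⟨(x.1, f x.1), rfl, (0, x.2 - f x.1), mem_range_self _ _, by simp⟩

theorem range_inl_sup_graph (f : M →ₗ[A] N) :
    range (inl A M N) ⊔ graph f = (range f).comap (snd A M N) := by
  refine le_antisymm (sup_le ?_ ?_) fun x ⟨m, hm⟩ => mem_sup.2 ?_
  · rintro _ ⟨m, rfl⟩
    simp
  · intro x hx
    rw [mem_graph_iff] at hx
    simp [hx]
  · exact ⟨(x.1 - m, 0), mem_range_self _ _, (m, f m), rfl, by ext <;> simp [hm]⟩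

theorem HasSSP.isSummand_range (H : HasSSP A (M × N)) (f : M →ₗ[A] N) :
    IsSummand (range f) := by
  have hsup := H _ _ ⟨_, isCompl_range_inl_inr⟩ ⟨_, isCompl_graph_range_inr f⟩
  rw [range_inl_sup_graph] at hsup
  exact hsup.of_comap snd_surjective

theorem HasSSP.isSummand_span_of_countable (H : HasSSP A ((ℕ →₀ A) × M)) {s : Set M}
    (hs : s.Countable) : IsSummand (span A s) := by
  obtain ⟨g, hg⟩ := (hs.insert 0).exists_eq_range (Set.insert_nonempty 0 s)
  rw [← span_insert_zero, hg, ← Finsupp.range_linearCombination]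
  exact H.isSummand_range _

end

theorem isNoetherian_of_forall_countable_fg {R M : Type*} [Semiring R] [AddCommMonoid M]
    [Module R M] (h : ∀ s : Set M, s.Countable → (span R s).FG) : IsNoetherian R M := by
  rw [isNoetherian_iff', wellFoundedGT_iff_monotone_chain_condition']
  by_contra! hchain
  obtain ⟨a, ha⟩ := hchain
  choose m _ hlt using ha
  choose x hx hxn using fun n => SetLike.exists_of_lt (hlt n)
  have hbound : span R (Set.range x) ≤ sSup (Set.range a) := span_le.2 <|
    Set.range_subset_iff.2 fun n => le_sSup (Set.mem_range_self (f := a) (m n)) (hx n)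
  have hcompact := (fg_iff_compact _).1 (h _ (Set.countable_range x))
  rw [CompleteLattice.isCompactElement_iff_le_of_directed_sSup_le] at hcompact
  obtain ⟨_, ⟨N, rfl⟩, hN⟩ :=
    hcompact _ (Set.range_nonempty a) (directedOn_range.2 a.monotone.directed_le) hbound
  exact hxn N (hN (subset_span ⟨N, rfl⟩))

section

variable {A : Type*} [Ring A]

noncomputable def finsuppNatProdEquiv : ((ℕ →₀ A) × A) ≃ₗ[A] (ℕ →₀ A) :=
  (LinearEquiv.refl A (ℕ →₀ A)).prodCongr (Finsupp.uniqueLinearEquiv A A ()).symm ≪≫ₗ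
    (Finsupp.sumFinsuppLEquivProdFinsupp A).symm ≪≫ₗ
    Finsupp.domLCongr Equiv.natSumPUnitEquivNat

theorem HasSSP.isSemisimpleRing (H : HasSSP A (ℕ →₀ A)) : IsSemisimpleRing A := by
  have hsummand : ∀ s : Set A, s.Countable → IsSummand (span A s) :=
    fun _ => (H.of_linearEquiv finsuppNatProdEquiv.symm).isSummand_span_of_countable
  have : IsNoetherian A A := isNoetherian_of_forall_countable_fg fun s hs => (hsummand s hs).fg
  refine (isSemisimpleModule_iff A A).2 ⟨fun I => ?_⟩
  obtain ⟨s, rfl⟩ := IsNoetherian.noetherian I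
  exact hsummand _ s.countable_toSet

theorem isSemisimpleRing_iff_hasSSP : IsSemisimpleRing A ↔ HasSSP A (ℕ →₀ A) :=
  ⟨fun _ p q _ _ => exists_isCompl (p ⊔ q), HasSSP.isSemisimpleRing⟩

end

/-- `R` is semisimple iff the countable direct sum `R^(ℕ)` of copies of `R`,
as a right `R`-module, has the SSP. -/
theorem stmt17 {R : Type*} [Ring R] :
    IsSemisimpleRing R ↔
    (∀ p q : Submodule Rᵐᵒᵖ (ℕ →₀ R), IsSummand p → IsSummand q →
      IsSummand (p ⊔ q)) := by
  rw [← isSemisimpleRing_mulOpposite_iff, isSemisimpleRing_iff_hasSSP]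
  let e : (ℕ →₀ R) ≃ₗ[Rᵐᵒᵖ] (ℕ →₀ Rᵐᵒᵖ) :=
    Finsupp.mapRange.linearEquiv (MulOpposite.opLinearEquiv Rᵐᵒᵖ)
  exact ⟨HasSSP.of_linearEquiv e.symm, HasSSP.of_linearEquiv e⟩
end
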